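/- Every product K_1 K_2 ⋯ K_n (including the empty product, the identity) with each K_i ∈ {A_4, A_4ᵀ, A_5, A_6} has positive (1,1) entry. -/

import Mathlib

open Matrix

lemma stmt_7_aux (L : List (Matrix (Fin 2) (Fin 2) ℤ))
    (hL : ∀ K ∈ L, K = !![3, 2; -2, -1] ∨ K = !![3, -2; 2, -1] ∨
          K = !![5, 2; 2, 1] ∨ K = !![5, -2; -2, 1]) :
    |L.prod 1 0| < L.prod 0 0 := by
  induction L with
  | nil => simp [Matrix.one_apply]
  | cons K T ih =>
    have hT := ih (fun K hK => hL K (List.mem_cons_of_mem _ hK))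
    rw [abs_lt] at hT ⊢
    rw [List.prod_cons]
    rcases hL K List.mem_cons_self with h|h|h|h <;>
      subst h <;>
      simp [Matrix.mul_apply, Fin.sum_univ_two, Matrix.cons_val_zero,
        Matrix.cons_val_one, Matrix.head_cons] <;>
      constructor <;> linarith [hT.1, hT.2]

/-- Every product (including the empty product) of matrices from
{A₄, A₄ᵀ, A₅, A₆} has positive (1,1) entry. -/
theorem stmt_7 (L : List (Matrix (Fin 2) (Fin 2) ℤ))
    (hL : ∀ K ∈ L, K = !![3, 2; -2, -1] ∨ K = !![3, -2; 2, -1] ∨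
          K = !![5, 2; 2, 1] ∨ K = !![5, -2; -2, 1]) :
    0 < L.prod 0 0 := by
  have h := stmt_7_aux L hL
  have := abs_nonneg (L.prod 1 0)
  linarith
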